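/- arXiv:2312.15533 — 3 statements merged into one kernel-verified Lean document; each statement's English description precedes it below -/
import Mathlib

section
/- Let n be even and let P be a partition of {1,...,n} in which every block has exactly 2 elements. Then D(P) = (-1)^(n/2), where D(P) counts odd chains minus even chains from the discrete partition to P in the refinement order. -/
/-- `chainDiff a b` is the number of odd-cardinality chains minus the number of
even-cardinality chains from `a` to `b`: a chain from `a` to `b` is a nonempty
totally ordered finite family whose least element is `a` and greatest element is `b`. -/
noncomputable def chainDiff {α : Type*} [PartialOrder α] (a b : α) : ℤ :=
  ({C : Finset α | a ∈ C ∧ b ∈ C ∧ IsChain (· ≤ ·) (↑C : Set α) ∧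
      (∀ x ∈ C, a ≤ x ∧ x ≤ b) ∧ Odd C.card}).ncard
  - ({C : Finset α | a ∈ C ∧ b ∈ C ∧ IsChain (· ≤ ·) (↑C : Set α) ∧
      (∀ x ∈ C, a ≤ x ∧ x ≤ b) ∧ Even C.card}).ncard

section General

open Finset

variable {α : Type*} [PartialOrder α] [Fintype α] [DecidableEq α]

open Classical in
/-- The finset of chains from `a` to `b`. -/
noncomputable def chainsF (a b : α) : Finset (Finset α) :=
  Finset.univ.filter (fun C => a ∈ C ∧ b ∈ C ∧ IsChain (· ≤ ·) (↑C : Set α) ∧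
      (∀ x ∈ C, a ≤ x ∧ x ≤ b))

open Classical in
lemma mem_chainsF {a b : α} {C : Finset α} :
    C ∈ chainsF a b ↔ a ∈ C ∧ b ∈ C ∧ IsChain (· ≤ ·) (↑C : Set α) ∧
      (∀ x ∈ C, a ≤ x ∧ x ≤ b) := by
  simp [chainsF]

open Classical in
lemma chainDiff_eq_sum (a b : α) :
    chainDiff a b = ∑ C ∈ chainsF a b, (-(-1 : ℤ) ^ C.card) := by
  classical
  have h1 : {C : Finset α | a ∈ C ∧ b ∈ C ∧ IsChain (· ≤ ·) (↑C : Set α) ∧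
      (∀ x ∈ C, a ≤ x ∧ x ≤ b) ∧ Odd C.card}
      = ↑((chainsF a b).filter (fun C => Odd C.card)) := by
    ext C; simp [mem_chainsF, and_assoc]
  have h2 : {C : Finset α | a ∈ C ∧ b ∈ C ∧ IsChain (· ≤ ·) (↑C : Set α) ∧
      (∀ x ∈ C, a ≤ x ∧ x ≤ b) ∧ Even C.card}
      = ↑((chainsF a b).filter (fun C => ¬ Odd C.card)) := by
    ext C; simp [mem_chainsF, and_assoc, Nat.not_odd_iff_even]
  have hnot : (chainsF a b).filter (fun C => ¬ Odd C.card)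
      = (chainsF a b).filter (fun C => Even C.card) := by
    apply Finset.filter_congr; intro C _; simp [Nat.not_odd_iff_even]
  rw [chainDiff, h1, h2, Set.ncard_coe_finset, Set.ncard_coe_finset]
  rw [← Finset.sum_filter_add_sum_filter_not (chainsF a b) (fun C => Odd C.card), hnot]
  have e1 : ∀ C ∈ (chainsF a b).filter (fun C => Odd C.card),
      (-(-1 : ℤ) ^ C.card) = 1 := by
    intro C hC
    rw [Finset.mem_filter] at hC
    rw [hC.2.neg_one_pow]; ring
  have e2 : ∀ C ∈ (chainsF a b).filter (fun C => Even C.card),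
      (-(-1 : ℤ) ^ C.card) = -1 := by
    intro C hC
    rw [Finset.mem_filter] at hC
    rw [hC.2.neg_one_pow]
  rw [Finset.sum_congr rfl e1, Finset.sum_congr rfl e2]
  simp only [Finset.sum_const, nsmul_eq_mul, mul_one, mul_neg_one]
  push_cast
  ring

lemma chainsF_self (a : α) : chainsF a a = {{a}} := by
  ext C
  rw [mem_chainsF, Finset.mem_singleton]
  constructor
  · rintro ⟨ha, -, -, hb⟩
    ext x
    simp only [Finset.mem_singleton]
    constructor
    · intro hx
      exact le_antisymm (hb x hx).2 (hb x hx).1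
    · rintro rfl; exact ha
  · rintro rfl
    refine ⟨Finset.mem_singleton_self a, Finset.mem_singleton_self a, ?_, ?_⟩
    · simp [IsChain, Set.Pairwise]
    · intro x hx
      rw [Finset.mem_singleton] at hx
      subst hx; exact ⟨le_rfl, le_rfl⟩

lemma chainDiff_self' (a : α) : chainDiff a a = 1 := by
  rw [chainDiff_eq_sum, chainsF_self]
  simp

lemma isChain_exists_greatest {C : Finset α} (hC : IsChain (· ≤ ·) (↑C : Set α))
    (hne : C.Nonempty) : ∃ x ∈ C, ∀ y ∈ C, y ≤ x := by
  obtain ⟨m, hm, hmax⟩ := C.exists_maximal hne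
  refine ⟨m, hm, fun y hy => ?_⟩
  rcases eq_or_ne y m with rfl | hne'
  · exact le_rfl
  rcases hC (Finset.mem_coe.2 hy) (Finset.mem_coe.2 hm) hne' with h | h
  · exact h
  · exact absurd (lt_of_le_of_ne h hne'.symm) (fun hlt => absurd (hmax hy h) (not_le_of_gt hlt))

open Classical in
lemma chainsF_eq_biUnion {a b : α} (hab : a < b) :
    chainsF a b = (Finset.univ.filter (fun x => a ≤ x ∧ x < b)).biUnion
      (fun x => (chainsF a x).image (insert b)) := by
  ext C
  simp only [Finset.mem_biUnion, Finset.mem_filter, Finset.mem_univ, true_and,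
    Finset.mem_image]
  constructor
  · intro hC
    rw [mem_chainsF] at hC
    obtain ⟨ha, hb, hch, hbd⟩ := hC
    have hab' : a ≠ b := ne_of_lt hab
    have ha0 : a ∈ C.erase b := Finset.mem_erase.2 ⟨hab', ha⟩
    have hch0 : IsChain (· ≤ ·) (↑(C.erase b) : Set α) := by
      refine hch.mono ?_
      intro x hx
      exact Finset.mem_coe.2 (Finset.mem_of_mem_erase (Finset.mem_coe.1 hx))
    obtain ⟨x, hxmem, hxmax⟩ := isChain_exists_greatest hch0 ⟨a, ha0⟩
    have hxC : x ∈ C := Finset.mem_of_mem_erase hxmem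
    have hxb : x < b :=
      lt_of_le_of_ne (hbd x hxC).2 (Finset.mem_erase.1 hxmem).1
    refine ⟨x, ⟨(hbd x hxC).1, hxb⟩, C.erase b, ?_, Finset.insert_erase hb⟩
    rw [mem_chainsF]
    refine ⟨ha0, hxmem, hch0, fun y hy => ⟨(hbd y (Finset.mem_of_mem_erase hy)).1,
      hxmax y hy⟩⟩
  · rintro ⟨x, ⟨hax, hxb⟩, D, hD, rfl⟩
    rw [mem_chainsF] at hD ⊢
    obtain ⟨ha, hx, hch, hbd⟩ := hD
    refine ⟨Finset.mem_insert_of_mem ha, Finset.mem_insert_self b D, ?_, ?_⟩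
    · rw [Finset.coe_insert]
      refine hch.insert (fun y hy _ => ?_)
      exact Or.inr (le_trans (hbd y (Finset.mem_coe.1 hy)).2 (le_of_lt hxb))
    · intro y hy
      rcases Finset.mem_insert.1 hy with rfl | hy'
      · exact ⟨le_of_lt (lt_of_le_of_lt hax hxb), le_rfl⟩
      · exact ⟨(hbd y hy').1, le_trans (hbd y hy').2 (le_of_lt hxb)⟩

lemma not_mem_of_chainsF {a b x : α} (hxb : x < b) {C : Finset α}
    (hC : C ∈ chainsF a x) : b ∉ C := by
  intro hb
  exact absurd ((mem_chainsF.1 hC).2.2.2 b hb).2 (not_le_of_gt hxb)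

open Classical in
lemma chainDiff_rec {a b : α} (hab : a < b) :
    chainDiff a b
      = -∑ x ∈ Finset.univ.filter (fun x => a ≤ x ∧ x < b), chainDiff a x := by
  classical
  rw [chainDiff_eq_sum, chainsF_eq_biUnion hab, Finset.sum_biUnion]
  · rw [← Finset.sum_neg_distrib]
    refine Finset.sum_congr rfl (fun x hx => ?_)
    rw [Finset.mem_filter] at hx
    rw [Finset.sum_image (fun C hC D hD h => by
      have hbC : b ∉ C := not_mem_of_chainsF hx.2.2 hC
      have hbD : b ∉ D := not_mem_of_chainsF hx.2.2 hD
      rw [← Finset.erase_insert hbC, ← Finset.erase_insert hbD, h])]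
    rw [chainDiff_eq_sum, ← Finset.sum_neg_distrib]
    refine Finset.sum_congr rfl (fun C hC => ?_)
    have hbC : b ∉ C := not_mem_of_chainsF hx.2.2 hC
    rw [Finset.card_insert_of_notMem hbC, pow_succ]
    ring
  · -- pairwise disjoint
    intro x hx y hy hxy
    refine Finset.disjoint_left.2 (fun C hCx hCy => ?_)
    obtain ⟨C₁, hC₁, rfl⟩ := Finset.mem_image.1 hCx
    obtain ⟨C₂, hC₂, heq⟩ := Finset.mem_image.1 hCy
    have hx' : x < b := by simp only [Finset.mem_coe, Finset.mem_filter] at hx ⊢; exact hx.2.2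
    have hy' : y < b := by simp only [Finset.mem_coe, Finset.mem_filter] at hy ⊢; exact hy.2.2
    have hb1 : b ∉ C₁ := not_mem_of_chainsF hx' hC₁
    have hb2 : b ∉ C₂ := not_mem_of_chainsF hy' hC₂
    have hC12 : C₁ = C₂ := by
      rw [← Finset.erase_insert hb1, ← Finset.erase_insert hb2, heq]
    apply hxy
    rw [mem_chainsF] at hC₁ hC₂
    have h1 : x ∈ C₁ := hC₁.2.1
    have h2 : y ∈ C₂ := hC₂.2.1
    exact le_antisymm (hC₂.2.2.2 x (hC12 ▸ h1)).2 (hC₁.2.2.2 y (hC12 ▸ h2 : y ∈ C₁)).2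

end General

noncomputable instance setoidFintype {β : Type*} [Finite β] : Fintype (Setoid β) := by
  have : Finite (Setoid β) := Finite.of_injective (fun s : Setoid β => s.r)
    (fun s t h => Setoid.ext fun a b => iff_of_eq (congrFun (congrFun h a) b))
  exact Fintype.ofFinite _

/-- If `n` is even and every block of the partition `P` of `{1,…,n}` has exactly
2 elements, then `D(P) = (-1)^(n/2)`. -/
theorem chainDiff_bot_pairs (n : ℕ) (hn : Even n) (P : Setoid (Fin n))
    (h2 : ∀ c ∈ P.classes, c.ncard = 2) :
    chainDiff (⊥ : Setoid (Fin n)) P = (-1) ^ (n / 2) := by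
  classical
  -- the partner function
  have hpart : ∀ i : Fin n, ∃ j, j ≠ i ∧ P i j ∧ ∀ k, k ≠ i → P i k → k = j := by
    intro i
    have hc := h2 _ (P.mem_classes i)
    rw [Set.ncard_eq_two] at hc
    obtain ⟨x, y, hxy, hset⟩ := hc
    have hi : i ∈ ({x, y} : Set (Fin n)) := by
      rw [← hset]; exact P.refl' i
    have hmem : ∀ k, P k i ↔ k ∈ ({x, y} : Set (Fin n)) := by
      intro k; rw [← hset]; rfl
    rcases hi with rfl | hi
    · refine ⟨y, fun h => hxy h.symm, P.symm' ((hmem y).2 (by simp)), ?_⟩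
      intro k hk hPk
      rcases (hmem k).1 (P.symm' hPk) with h | h
      · exact absurd h hk
      · exact h
    · simp only [Set.mem_singleton_iff] at hi; subst hi
      refine ⟨x, fun h => hxy h, P.symm' ((hmem x).2 (by simp)), ?_⟩
      intro k hk hPk
      rcases (hmem k).1 (P.symm' hPk) with h | h
      · exact h
      · exact absurd h hk
  set σ : Fin n → Fin n := fun i => (hpart i).choose with hσdef
  have hσ1 : ∀ i, σ i ≠ i := fun i => (hpart i).choose_spec.1
  have hσ2 : ∀ i, P i (σ i) := fun i => (hpart i).choose_spec.2.1
  have hσ3 : ∀ i k, k ≠ i → P i k → k = σ i := fun i => (hpart i).choose_spec.2.2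
  have hσσ : ∀ i, σ (σ i) = i := by
    intro i
    exact (hσ3 (σ i) i (fun h => hσ1 i h.symm) (P.symm' (hσ2 i))).symm
  -- `ksupp`
  set ksupp : Setoid (Fin n) → Finset (Fin n) :=
    fun y => Finset.univ.filter (fun i => i < σ i ∧ y i (σ i)) with hksupp
  have hmem_ks : ∀ (y : Setoid (Fin n)) i, i ∈ ksupp y ↔ i < σ i ∧ y i (σ i) := by
    intro y i; simp [hksupp]
  -- uniqueness of partner for sub-partitions
  have huniq : ∀ y : Setoid (Fin n), y ≤ P → ∀ a b, y a b → a ≠ b → b = σ a := by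
    intro y hy a b hab hne
    exact hσ3 a b hne.symm (Setoid.le_def.1 hy hab)
  -- order characterisation
  have hle_iff : ∀ y : Setoid (Fin n), y ≤ P → ∀ x : Setoid (Fin n), x ≤ P →
      (y ≤ x ↔ ksupp y ⊆ ksupp x) := by
    intro y hy x hx
    constructor
    · intro hyx i hi
      rw [hmem_ks] at hi ⊢
      exact ⟨hi.1, Setoid.le_def.1 hyx hi.2⟩
    · intro hsub
      rw [Setoid.le_def]
      intro a b hab
      rcases eq_or_ne a b with rfl | hne
      · exact x.refl' a
      have hb : b = σ a := huniq y hy a b hab hne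
      subst hb
      rcases lt_trichotomy a (σ a) with h | h | h
      · have ha : a ∈ ksupp y := (hmem_ks y a).2 ⟨h, hab⟩
        exact ((hmem_ks x a).1 (hsub ha)).2
      · exact absurd h.symm (hσ1 a)
      · have h' : σ a < σ (σ a) := by rw [hσσ]; exact h
        have ha : σ a ∈ ksupp y := by
          rw [hmem_ks]
          refine ⟨h', ?_⟩
          rw [hσσ]
          exact y.symm' hab
        have := ((hmem_ks x (σ a)).1 (hsub ha)).2
        rw [hσσ] at this
        exact x.symm' this
  -- bottom characterisation
  have hbot : ∀ y : Setoid (Fin n), y ≤ P → ksupp y = ∅ → y = ⊥ := by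
    intro y hy hks
    refine le_antisymm ?_ bot_le
    rw [Setoid.le_def]
    intro a b hab
    have hab' : a = b := by
      by_contra hne
      have hb : b = σ a := huniq y hy a b hab hne
      subst hb
      rcases lt_trichotomy a (σ a) with h | h | h
      · have : a ∈ ksupp y := (hmem_ks y a).2 ⟨h, hab⟩
        simp [hks] at this
      · exact hσ1 a h.symm
      · have h' : σ a < σ (σ a) := by rw [hσσ]; exact h
        have : σ a ∈ ksupp y := by
          rw [hmem_ks]
          refine ⟨h', ?_⟩
          rw [hσσ]
          exact y.symm' hab
        simp [hks] at this
    show (⊥ : Setoid (Fin n)) a b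
    rw [show (⊥ : Setoid (Fin n)) a b ↔ a = b from Iff.rfl]
    exact hab'
  have hksbot : ksupp ⊥ = ∅ := by
    ext i
    simp only [hmem_ks, Finset.notMem_empty, iff_false, not_and]
    intro _
    exact fun h => hσ1 i ((show (⊥ : Setoid (Fin n)) i (σ i) ↔ i = σ i from Iff.rfl).1 h).symm
  -- surjectivity: each subset of ksupp x comes from some y ≤ x
  have hsurj : ∀ x : Setoid (Fin n), x ≤ P → ∀ T ⊆ ksupp x,
      ∃ y : Setoid (Fin n), y ≤ x ∧ ksupp y = T := by
    intro x hx T hT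
    set r : Fin n → Fin n → Prop :=
      fun a b => a = b ∨ (b = σ a ∧ (a ∈ T ∨ σ a ∈ T)) with hr
    have hrequiv : Equivalence r := by
      constructor
      · intro a; exact Or.inl rfl
      · rintro a b (rfl | ⟨rfl, h⟩)
        · exact Or.inl rfl
        · refine Or.inr ⟨(hσσ a).symm, ?_⟩
          rw [hσσ]
          tauto
      · rintro a b c (rfl | ⟨rfl, h⟩) hbc
        · exact hbc
        · rcases hbc with rfl | ⟨rfl, h'⟩
          · exact Or.inr ⟨rfl, h⟩
          · rw [hσσ]; exact Or.inl rfl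
    set y : Setoid (Fin n) := ⟨r, hrequiv⟩ with hy
    have hyr : ∀ a b, y a b ↔ r a b := fun a b => Iff.rfl
    have hyP : y ≤ P := by
      rw [Setoid.le_def]
      intro a b hab
      rcases (hyr a b).1 hab with rfl | ⟨rfl, -⟩
      · exact P.refl' a
      · exact hσ2 a
    have hksy : ksupp y = T := by
      ext i
      rw [hmem_ks]
      constructor
      · rintro ⟨hlt, hrel⟩
        rcases (hyr i (σ i)).1 hrel with h | ⟨-, h | h⟩
        · exact absurd h.symm (hσ1 i)
        · exact h
        · have := ((hmem_ks x (σ i)).1 (hT h)).1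
          rw [hσσ] at this
          exact absurd hlt (asymm this)
      · intro hi
        have hlt : i < σ i := ((hmem_ks x i).1 (hT hi)).1
        exact ⟨hlt, (hyr i (σ i)).2 (Or.inr ⟨rfl, Or.inl hi⟩)⟩
    exact ⟨y, (hle_iff y hyP x hx).2 (hksy ▸ hT), hksy⟩
  -- the zero-sum identity
  have hsum0 : ∀ x : Setoid (Fin n), x ≤ P → x ≠ ⊥ →
      ∑ y ∈ Finset.univ.filter (fun y : Setoid (Fin n) => y ≤ x),
        ((-1 : ℤ) ^ (ksupp y).card) = 0 := by
    intro x hx hxb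
    have hne : (ksupp x).Nonempty := by
      rw [Finset.nonempty_iff_ne_empty]
      intro h
      exact hxb (hbot x hx h)
    have : ∑ y ∈ Finset.univ.filter (fun y : Setoid (Fin n) => y ≤ x),
          ((-1 : ℤ) ^ (ksupp y).card)
        = ∑ T ∈ (ksupp x).powerset, ((-1 : ℤ) ^ T.card) := by
      refine Finset.sum_bij (fun y _ => ksupp y) ?_ ?_ ?_ ?_
      · intro y hy
        rw [Finset.mem_filter] at hy
        rw [Finset.mem_powerset]
        have hyP : y ≤ P := le_trans hy.2 hx
        exact (hle_iff y hyP x hx).1 hy.2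
      · intro y1 h1 y2 h2 heq
        rw [Finset.mem_filter] at h1 h2
        have h1P : y1 ≤ P := le_trans h1.2 hx
        have h2P : y2 ≤ P := le_trans h2.2 hx
        exact le_antisymm ((hle_iff y1 h1P y2 h2P).2 (le_of_eq heq))
          ((hle_iff y2 h2P y1 h1P).2 (le_of_eq heq.symm))
      · intro T hT
        rw [Finset.mem_powerset] at hT
        obtain ⟨y, hyx, hky⟩ := hsurj x hx T hT
        exact ⟨y, Finset.mem_filter.2 ⟨Finset.mem_univ y, hyx⟩, hky⟩
      · intro y _; rfl
    rw [this]
    exact Finset.sum_powerset_neg_one_pow_card_of_nonempty hne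
  -- the main induction
  have main : ∀ m : ℕ, ∀ x : Setoid (Fin n), x ≤ P → (ksupp x).card = m →
      chainDiff (⊥ : Setoid (Fin n)) x = (-1) ^ m := by
    intro m
    induction m using Nat.strong_induction_on with
    | _ m IH =>
      intro x hx hcard
      rcases eq_or_ne x ⊥ with rfl | hxb
      · rw [hksbot] at hcard
        simp only [Finset.card_empty] at hcard
        subst hcard
        simpa using chainDiff_self' (⊥ : Setoid (Fin n))
      · have hblt : (⊥ : Setoid (Fin n)) < x := Ne.bot_lt hxb
        rw [chainDiff_rec hblt]
        have hfilter : Finset.univ.filter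
              (fun y : Setoid (Fin n) => ⊥ ≤ y ∧ y < x)
            = Finset.univ.filter (fun y : Setoid (Fin n) => y < x) := by
          apply Finset.filter_congr
          intro y _
          simp [bot_le]
        rw [hfilter]
        have hIH : ∀ y ∈ Finset.univ.filter (fun y : Setoid (Fin n) => y < x),
            chainDiff (⊥ : Setoid (Fin n)) y = (-1) ^ (ksupp y).card := by
          intro y hy
          rw [Finset.mem_filter] at hy
          have hyx : y ≤ x := le_of_lt hy.2
          have hyP : y ≤ P := le_trans hyx hx
          have hss : ksupp y ⊂ ksupp x := by
            refine Finset.ssubset_iff_subset_ne.2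
              ⟨(hle_iff y hyP x hx).1 hyx, fun h => ?_⟩
            exact absurd (le_antisymm hyx ((hle_iff x hx y hyP).2 (le_of_eq h.symm)))
              (ne_of_lt hy.2)
          have hlt : (ksupp y).card < m := hcard ▸ Finset.card_lt_card hss
          exact IH _ hlt y hyP rfl
        rw [Finset.sum_congr rfl hIH]
        have hsplit : Finset.univ.filter (fun y : Setoid (Fin n) => y ≤ x)
            = insert x (Finset.univ.filter (fun y : Setoid (Fin n) => y < x)) := by
          ext y
          simp only [Finset.mem_filter, Finset.mem_univ, true_and, Finset.mem_insert]
          rw [le_iff_lt_or_eq]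
          tauto
        have hxnot : x ∉ Finset.univ.filter (fun y : Setoid (Fin n) => y < x) := by
          simp [lt_irrefl]
        have h0 := hsum0 x hx hxb
        rw [hsplit, Finset.sum_insert hxnot] at h0
        have : ∑ y ∈ Finset.univ.filter (fun y : Setoid (Fin n) => y < x),
            ((-1 : ℤ) ^ (ksupp y).card) = -(-1 : ℤ) ^ (ksupp x).card := by
          linarith
        rw [this, hcard]
        ring
  -- compute ksupp P and its cardinality
  have hksP : ksupp P = Finset.univ.filter (fun i => i < σ i) := by
    ext i
    rw [hmem_ks]
    simp only [Finset.mem_filter, Finset.mem_univ, true_and]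
    exact ⟨fun h => h.1, fun h => ⟨h, hσ2 i⟩⟩
  have hcardR : 2 * (ksupp P).card = n := by
    rw [hksP]
    have hsplit := Finset.card_filter_add_card_filter_not
      (s := (Finset.univ : Finset (Fin n))) (p := fun i => i < σ i)
    beta_reduce at hsplit
    have hbij : (Finset.univ.filter (fun i => ¬ i < σ i)).card
        = (Finset.univ.filter (fun i : Fin n => i < σ i)).card := by
      refine Finset.card_nbij' σ σ ?_ ?_ ?_ ?_
      · intro a ha
        simp only [Finset.mem_coe, Finset.mem_filter, Finset.mem_univ, true_and] at ha ⊢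
        rcases lt_trichotomy a (σ a) with h | h | h
        · exact absurd h ha
        · exact absurd h.symm (hσ1 a)
        · rw [hσσ]; exact h
      · intro a ha
        simp only [Finset.mem_coe, Finset.mem_filter, Finset.mem_univ, true_and] at ha ⊢
        rw [hσσ]
        exact asymm ha
      · intro a _; exact hσσ a
      · intro a _; exact hσσ a
    have huniv : (Finset.univ : Finset (Fin n)).card = n := by simp
    omega
  have hhalf : (ksupp P).card = n / 2 := by omega
  rw [main (ksupp P).card P le_rfl rfl, hhalf]
end

section
/- Let r ∈ ℕ⁺, let (X,μ) be a σ-finite measure space, and let f₁,...,f_L ∈ L^{2r}(X,μ) be complex-valued functions satisfying Type IV superorthogonality: ∫_X f_{l₁} conj(f_{l₂}) ⋯ f_{l_{2r−1}} conj(f_{l_{2r}}) dμ = 0 whenever the indices l₁,...,l_{2r} ∈ {1,...,L} are pairwise distinct. Then ‖∑_{l=1}^L f_l‖_{L^{2r}} ≤ C_r ‖(∑_{l=1}^L |f_l|²)^{1/2}‖_{L^{2r}} for a constant C_r depending only on r. -/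
open MeasureTheory Finset
open scoped ENNReal NNReal

section Combinatorial

noncomputable def injSum {L : ℕ} (n : ℕ) (z : Fin n → Fin L → ℂ) : ℂ :=
  ∑ l ∈ Finset.univ.filter (fun l : Fin n → Fin L => Function.Injective l), ∏ j, z j (l j)

lemma injSum_zero {L : ℕ} (z : Fin 0 → Fin L → ℂ) : injSum 0 z = 1 := by
  have : (Finset.univ.filter (fun l : Fin 0 → Fin L => Function.Injective l)) = Finset.univ := by
    apply Finset.filter_true_of_mem
    intro l _ a
    exact a.elim0
  rw [injSum, this]
  simp

lemma injSum_succ {L n : ℕ} (z : Fin (n + 1) → Fin L → ℂ) :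
    injSum (n + 1) z = (∑ m, z 0 m) * injSum n (fun j => z j.succ)
      - ∑ j : Fin n, injSum n
          (Function.update (fun k => z k.succ) j (fun m => z 0 m * z j.succ m)) := by
  classical
  rw [injSum, Finset.sum_filter]
  rw [← Equiv.sum_comp (Fin.consEquiv (fun _ => Fin L))]
  rw [Fintype.sum_prod_type]
  have step1 : ∀ (m : Fin L) (l' : Fin n → Fin L),
      (if Function.Injective ((Fin.consEquiv (fun _ => Fin L)) (m, l')) then
        ∏ j, z j (((Fin.consEquiv (fun _ => Fin L)) (m, l')) j) else 0)
      = (if Function.Injective l' then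
          (if m ∉ Set.range l' then z 0 m else 0) * ∏ j : Fin n, z j.succ (l' j) else 0) := by
    intro m l'
    have hc : ((Fin.consEquiv (fun _ => Fin L)) (m, l')) = Fin.cons m l' := rfl
    have hp : ∏ j, z j ((Fin.cons m l' : Fin (n+1) → Fin L) j) = z 0 m * ∏ j : Fin n, z j.succ (l' j) := by
      rw [Fin.prod_univ_succ]; simp
    by_cases h1 : Function.Injective l' <;> by_cases h2 : m ∉ Set.range l' <;>
      simp [hc, Fin.cons_injective_iff, h1, h2, hp]
  simp_rw [step1]
  have step2 : ∀ l' : Fin n → Fin L, Function.Injective l' →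
      (∑ m, if m ∉ Set.range l' then z 0 m else 0)
        = (∑ m, z 0 m) - ∑ j : Fin n, z 0 (l' j) := by
    intro l' hl'
    have h1 : (∑ m, if m ∉ Set.range l' then z 0 m else 0)
        = ∑ m ∈ Finset.univ.filter (fun m => m ∉ Set.range l'), z 0 m :=
      (Finset.sum_filter _ _).symm
    have h2 : Finset.univ.filter (fun m => m ∉ Set.range l') = Finset.univ \ Finset.image l' Finset.univ := by
      ext m
      simp [Set.mem_range]
    rw [h1, h2, Finset.sum_sdiff_eq_sub (Finset.subset_univ _),
      Finset.sum_image (fun a _ b _ h => hl' h)]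
  -- separate the sum according to injectivity and compute
  have main : ∀ l' : Fin n → Fin L,
      (∑ m, if Function.Injective l' then
          (if m ∉ Set.range l' then z 0 m else 0) * ∏ j : Fin n, z j.succ (l' j) else 0)
      = (if Function.Injective l' then
          ((∑ m, z 0 m) * ∏ j : Fin n, z j.succ (l' j)
            - ∑ j : Fin n, ∏ k : Fin n,
                (Function.update (fun k => z k.succ) j (fun m => z 0 m * z j.succ m)) k (l' k))
          else 0) := by
    intro l'
    by_cases h1 : Function.Injective l'
    · simp only [h1, if_true]
      rw [← Finset.sum_mul, step2 l' h1, sub_mul]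
      congr 1
      rw [Finset.sum_mul]
      apply Finset.sum_congr rfl
      intro j _
      rw [Finset.prod_eq_mul_prod_sdiff_singleton_of_mem (Finset.mem_univ j)
          (fun k => (Function.update (fun k => z k.succ) j (fun m => z 0 m * z j.succ m)) k (l' k)),
        Finset.prod_eq_mul_prod_sdiff_singleton_of_mem (Finset.mem_univ j) (fun k => z k.succ (l' k))]
      rw [Function.update_self]
      have : ∀ k ∈ Finset.univ \ {j},
          (Function.update (fun k => z k.succ) j (fun m => z 0 m * z j.succ m)) k (l' k)
            = z k.succ (l' k) := by
        intro k hk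
        have hkj : k ≠ j := by simpa using (Finset.mem_sdiff.mp hk).2
        rw [Function.update_of_ne hkj]
      rw [Finset.prod_congr rfl this]
      ring
    · simp [h1]
  rw [Finset.sum_comm]
  simp_rw [main]
  have split : ∀ l' : Fin n → Fin L,
      (if Function.Injective l' then
          ((∑ m, z 0 m) * ∏ j : Fin n, z j.succ (l' j)
            - ∑ j : Fin n, ∏ k : Fin n,
                (Function.update (fun k => z k.succ) j (fun m => z 0 m * z j.succ m)) k (l' k))
          else 0)
      = (if Function.Injective l' then
          (∑ m, z 0 m) * ∏ j : Fin n, z j.succ (l' j) else 0)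
        - ∑ j : Fin n, (if Function.Injective l' then
            ∏ k : Fin n,
                (Function.update (fun k => z k.succ) j (fun m => z 0 m * z j.succ m)) k (l' k)
            else 0) := by
    intro l'
    by_cases h1 : Function.Injective l' <;> simp [h1]
  simp_rw [split]
  rw [Finset.sum_sub_distrib]
  congr 1
  · rw [injSum, Finset.sum_filter, Finset.mul_sum]
    apply Finset.sum_congr rfl
    intro l' _
    by_cases h1 : Function.Injective l' <;> simp [h1]
  · rw [Finset.sum_comm]
    apply Finset.sum_congr rfl
    intro j _
    rw [injSum, Finset.sum_filter]


/-- bound currency: `g + M` for degree 1, `g ^ k` for other degrees. -/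
noncomputable def bnd (g M : ℝ) (k : ℕ) : ℝ := if k = 1 then g + M else g ^ k

lemma bnd_nonneg {g M : ℝ} (hg : 0 ≤ g) (hM : 0 ≤ M) (k : ℕ) : 0 ≤ bnd g M k := by
  unfold bnd; split <;> positivity

lemma pow_le_bnd {g M : ℝ} (hg : 0 ≤ g) (hM : 0 ≤ M) (k : ℕ) : g ^ k ≤ bnd g M k := by
  unfold bnd; split
  · simp_all [le_add_iff_nonneg_right]
  · exact le_refl _

lemma sum_pow_le {L : ℕ} {w : Fin L → ℝ} {g : ℝ} (hg : 0 ≤ g)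
    (hw : ∀ m, 0 ≤ w m) (hwle : ∀ m, w m ≤ g) (hw2 : ∑ m, w m ^ 2 ≤ g ^ 2)
    {k : ℕ} (hk : 2 ≤ k) : ∑ m, w m ^ k ≤ g ^ k := by
  have h1 : ∀ m : Fin L, w m ^ k ≤ g ^ (k - 2) * w m ^ 2 := by
    intro m
    have : w m ^ k = w m ^ (k - 2) * w m ^ 2 := by
      rw [← pow_add]; congr 1; omega
    rw [this]
    exact mul_le_mul_of_nonneg_right (pow_le_pow_left₀ (hw m) (hwle m) _) (by positivity)
  calc ∑ m, w m ^ k ≤ ∑ m, g ^ (k - 2) * w m ^ 2 := Finset.sum_le_sum fun m _ => h1 m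
    _ = g ^ (k - 2) * ∑ m, w m ^ 2 := by rw [Finset.mul_sum]
    _ ≤ g ^ (k - 2) * g ^ 2 := mul_le_mul_of_nonneg_left hw2 (by positivity)
    _ = g ^ k := by rw [← pow_add]; congr 1; omega

lemma abs_injSum_le {L : ℕ} {w : Fin L → ℝ} {g M : ℝ} (hg : 0 ≤ g) (hM : 0 ≤ M)
    (hw : ∀ m, 0 ≤ w m) (hwle : ∀ m, w m ≤ g) (hw2 : ∑ m, w m ^ 2 ≤ g ^ 2) :
    ∀ (n : ℕ) (z : Fin n → Fin L → ℂ) (d : Fin n → ℕ),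
      (∀ j, 1 ≤ d j) →
      (∀ j m, ‖z j m‖ ≤ w m ^ d j) →
      (∀ j, d j = 1 → ‖∑ m, z j m‖ ≤ M) →
      ‖injSum n z‖ ≤ (n.factorial : ℝ) * ∏ j, bnd g M (d j) := by
  intro n
  induction n with
  | zero =>
    intro z d _ _ _
    rw [injSum_zero]
    simp
  | succ n ih =>
    intro z d hd hz hM1
    -- sum bound for each slot
    have habs_sum : ∀ j : Fin (n + 1), ‖∑ m, z j m‖ ≤ bnd g M (d j) := by
      intro j
      by_cases h1 : d j = 1
      · rw [bnd, if_pos h1]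
        calc ‖∑ m, z j m‖ ≤ M := hM1 j h1
          _ ≤ g + M := by linarith
      · rw [bnd, if_neg h1]
        have h2 : 2 ≤ d j := by have := hd j; omega
        calc ‖∑ m, z j m‖ ≤ ∑ m, ‖z j m‖ := by
              exact norm_sum_le _ _
          _ ≤ ∑ m, w m ^ d j := Finset.sum_le_sum fun m _ => hz j m
          _ ≤ g ^ d j := sum_pow_le hg hw hwle hw2 h2
    rw [injSum_succ]
    have ih1 : ‖injSum n (fun j => z j.succ)‖ ≤
        (n.factorial : ℝ) * ∏ j : Fin n, bnd g M (d j.succ) :=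
      ih _ (fun j => d j.succ) (fun j => hd j.succ) (fun j m => hz j.succ m)
        (fun j h => hM1 j.succ h)
    have ih2 : ∀ j : Fin n,
        ‖injSum n (Function.update (fun k => z k.succ) j
            (fun m => z 0 m * z j.succ m))‖ ≤
          (n.factorial : ℝ) * (g ^ (d 0 + d j.succ) * ∏ k ∈ Finset.univ \ {j}, bnd g M (d k.succ)) := by
      intro j
      have h := ih (Function.update (fun k => z k.succ) j (fun m => z 0 m * z j.succ m))
        (Function.update (fun k => d k.succ) j (d 0 + d j.succ))
        (by
          intro k
          rcases eq_or_ne k j with rfl | hkj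
          · rw [Function.update_self]; have := hd 0; omega
          · rw [Function.update_of_ne hkj]; exact hd k.succ)
        (by
          intro k m
          rcases eq_or_ne k j with rfl | hkj
          · rw [Function.update_self, Function.update_self, pow_add, norm_mul]
            exact mul_le_mul (hz 0 m) (hz k.succ m) (norm_nonneg _) (pow_nonneg (hw m) _)
          · rw [Function.update_of_ne hkj, Function.update_of_ne hkj]
            exact hz k.succ m)
        (by
          intro k hk1
          rcases eq_or_ne k j with rfl | hkj
          · rw [Function.update_self] at hk1; have := hd 0; have := hd k.succ; omega
          · rw [Function.update_of_ne hkj] at hk1 ⊢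
            exact hM1 k.succ hk1)
      refine h.trans ?_
      apply mul_le_mul_of_nonneg_left _ (by positivity)
      rw [Finset.prod_eq_mul_prod_sdiff_singleton_of_mem (Finset.mem_univ j)]
      rw [Function.update_self]
      have heq : ∀ k ∈ Finset.univ \ {j},
          bnd g M ((Function.update (fun k => d k.succ) j (d 0 + d j.succ)) k) = bnd g M (d k.succ) := by
        intro k hk
        have hkj : k ≠ j := by simpa using (Finset.mem_sdiff.mp hk).2
        rw [Function.update_of_ne hkj]
      rw [Finset.prod_congr rfl heq]
      apply mul_le_mul_of_nonneg_right _ (Finset.prod_nonneg fun k _ => bnd_nonneg hg hM _)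
      rw [bnd, if_neg (by have := hd 0; have := hd j.succ; omega)]
    -- assemble
    calc ‖(∑ m, z 0 m) * injSum n (fun j => z j.succ)
          - ∑ j : Fin n, injSum n (Function.update (fun k => z k.succ) j
              (fun m => z 0 m * z j.succ m))‖
        ≤ ‖(∑ m, z 0 m) * injSum n (fun j => z j.succ)‖
          + ‖∑ j : Fin n, injSum n (Function.update (fun k => z k.succ) j
              (fun m => z 0 m * z j.succ m))‖ := by
          exact (norm_sub_le _ _)
      _ ≤ bnd g M (d 0) * ((n.factorial : ℝ) * ∏ j : Fin n, bnd g M (d j.succ))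
          + ∑ j : Fin n, (n.factorial : ℝ) *
              (g ^ (d 0 + d j.succ) * ∏ k ∈ Finset.univ \ {j}, bnd g M (d k.succ)) := by
          apply add_le_add
          · rw [norm_mul]
            exact mul_le_mul (habs_sum 0) ih1 (norm_nonneg _)
              (bnd_nonneg hg hM _)
          · exact (norm_sum_le _ _).trans (Finset.sum_le_sum fun j _ => ih2 j)
      _ ≤ (n.factorial : ℝ) * (bnd g M (d 0) * ∏ j : Fin n, bnd g M (d j.succ))
          + ∑ j : Fin n, (n.factorial : ℝ) *
              (bnd g M (d 0) * ∏ k : Fin n, bnd g M (d k.succ)) := by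
          apply add_le_add
          · exact le_of_eq (by ring)
          · apply Finset.sum_le_sum
            intro j _
            apply mul_le_mul_of_nonneg_left _ (by positivity)
            rw [pow_add]
            calc g ^ d 0 * g ^ d j.succ * ∏ k ∈ Finset.univ \ {j}, bnd g M (d k.succ)
                ≤ bnd g M (d 0) * bnd g M (d j.succ) * ∏ k ∈ Finset.univ \ {j}, bnd g M (d k.succ) := by
                  apply mul_le_mul_of_nonneg_right _ (Finset.prod_nonneg fun k _ => bnd_nonneg hg hM _)
                  exact mul_le_mul (pow_le_bnd hg hM _) (pow_le_bnd hg hM _) (by positivity)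
                    (bnd_nonneg hg hM _)
              _ = bnd g M (d 0) * ∏ k : Fin n, bnd g M (d k.succ) := by
                  rw [mul_assoc]
                  congr 1
                  exact (Finset.prod_eq_mul_prod_sdiff_singleton_of_mem (Finset.mem_univ j)
                    (fun k => bnd g M (d k.succ))).symm
      _ = ((n.factorial : ℝ) + n * n.factorial) * ∏ j : Fin (n+1), bnd g M (d j) := by
          rw [Fin.prod_univ_succ, Finset.sum_const, Finset.card_univ, Fintype.card_fin]
          ring
      _ ≤ ((n+1).factorial : ℝ) * ∏ j : Fin (n+1), bnd g M (d j) := by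
          apply mul_le_mul_of_nonneg_right _ (Finset.prod_nonneg fun k _ => bnd_nonneg hg hM _)
          rw [Nat.factorial_succ]
          push_cast
          nlinarith [Nat.factorial_pos n, (Nat.cast_pos (α := ℝ)).2 (Nat.factorial_pos n)]



lemma injSum_eq_prod_of_small {L : ℕ} {n : ℕ} (hn : n ≤ 1) (z : Fin n → Fin L → ℂ) :
    injSum n z = ∏ j, (∑ m, z j m) := by
  interval_cases n
  · rw [injSum_zero]; simp
  · rw [injSum_succ]
    simp [injSum_zero]

lemma abs_prod_sub_injSum_le {L : ℕ} {w : Fin L → ℝ} {g M : ℝ} (hg : 0 ≤ g) (hM : 0 ≤ M)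
    (hw : ∀ m, 0 ≤ w m) (hwle : ∀ m, w m ≤ g) (hw2 : ∑ m, w m ^ 2 ≤ g ^ 2) :
    ∀ (n : ℕ) (z : Fin n → Fin L → ℂ),
      (∀ j m, ‖z j m‖ ≤ w m) →
      (∀ j, ‖∑ m, z j m‖ ≤ M) →
      ‖(∏ j, ∑ m, z j m) - injSum n z‖ ≤
        ((n + 2).factorial : ℝ) * (g ^ 2 * (g + M) ^ (n - 2)) := by
  intro n
  induction n with
  | zero =>
    intro z _ _
    rw [injSum_zero]
    simp [Finset.univ_eq_empty]
    positivity
  | succ n ih =>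
    intro z hz hS
    have key : (∏ j, ∑ m, z j m) - injSum (n + 1) z
        = (∑ m, z 0 m) * ((∏ j : Fin n, ∑ m, z j.succ m) - injSum n (fun j => z j.succ))
          + ∑ j : Fin n, injSum n
            (Function.update (fun k => z k.succ) j (fun m => z 0 m * z j.succ m)) := by
      rw [injSum_succ, Fin.prod_univ_succ]
      ring
    rw [key]
    -- bound merged terms via abs_injSum_le with degrees: 2 at slot j, 1 elsewhere
    have hmerge : ∀ j : Fin n,
        ‖injSum n (Function.update (fun k => z k.succ) j
            (fun m => z 0 m * z j.succ m))‖ ≤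
          (n.factorial : ℝ) * (g ^ 2 * (g + M) ^ (n - 1)) := by
      intro j
      have h := abs_injSum_le hg hM hw hwle hw2 n
        (Function.update (fun k => z k.succ) j (fun m => z 0 m * z j.succ m))
        (Function.update (fun _ => 1) j 2)
        (by
          intro k
          rcases eq_or_ne k j with rfl | hkj
          · rw [Function.update_self]; omega
          · rw [Function.update_of_ne hkj])
        (by
          intro k m
          rcases eq_or_ne k j with rfl | hkj
          · rw [Function.update_self, Function.update_self, norm_mul, pow_two]
            exact mul_le_mul (hz 0 m) (hz k.succ m) (norm_nonneg _) (hw m)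
          · rw [Function.update_of_ne hkj, Function.update_of_ne hkj, pow_one]
            exact hz k.succ m)
        (by
          intro k hk1
          rcases eq_or_ne k j with rfl | hkj
          · rw [Function.update_self] at hk1; omega
          · rw [Function.update_of_ne hkj]
            exact hS k.succ)
      refine h.trans (le_of_eq ?_)
      congr 1
      have hfun : (fun k => bnd g M (Function.update (fun _ => (1 : ℕ)) j 2 k))
          = Function.update (fun _ => bnd g M 1) j (bnd g M 2) := by
        ext k
        rcases eq_or_ne k j with rfl | hkj
        · rw [Function.update_self, Function.update_self]
        · rw [Function.update_of_ne hkj, Function.update_of_ne hkj]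
      have : ∏ k : Fin n, bnd g M (Function.update (fun _ => (1 : ℕ)) j 2 k)
          = ∏ k : Fin n, Function.update (fun _ => bnd g M 1) j (bnd g M 2) k := by
        rw [hfun]
      rw [this, Finset.prod_update_of_mem (Finset.mem_univ j)]
      have h1 : bnd g M 1 = g + M := by rw [bnd, if_pos rfl]
      have h2 : bnd g M 2 = g ^ 2 := by rw [bnd]; norm_num
      rw [h1, h2, Finset.prod_const]
      have hcard : (Finset.univ \ {j} : Finset (Fin n)).card = n - 1 := by
        rw [Finset.card_sdiff_of_subset (by simp)]
        simp
      rw [hcard]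
    -- bound the first term
    have hfirst : ‖(∑ m, z 0 m) *
        ((∏ j : Fin n, ∑ m, z j.succ m) - injSum n (fun j => z j.succ))‖ ≤
          ((n + 2).factorial : ℝ) * (g ^ 2 * (g + M) ^ (n - 1)) := by
      rcases le_or_gt n 1 with hn | hn
      · rw [injSum_eq_prod_of_small hn, sub_self, norm_mul, norm_zero, mul_zero]
        positivity
      · have ihb := ih (fun j => z j.succ) (fun j m => hz j.succ m) (fun j => hS j.succ)
        rw [norm_mul]
        calc ‖∑ m, z 0 m‖ *
              ‖(∏ j : Fin n, ∑ m, z j.succ m) - injSum n (fun j => z j.succ)‖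
            ≤ M * (((n + 2).factorial : ℝ) * (g ^ 2 * (g + M) ^ (n - 2))) := by
              apply mul_le_mul (hS 0) ihb (norm_nonneg _) hM
          _ ≤ (g + M) * (((n + 2).factorial : ℝ) * (g ^ 2 * (g + M) ^ (n - 2))) := by
              apply mul_le_mul_of_nonneg_right (by linarith) (by positivity)
          _ = ((n + 2).factorial : ℝ) * (g ^ 2 * ((g + M) ^ (n - 2) * (g + M))) := by ring
          _ = ((n + 2).factorial : ℝ) * (g ^ 2 * (g + M) ^ (n - 1)) := by
              rw [← pow_succ, show n - 2 + 1 = n - 1 by omega]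
    calc ‖_‖ ≤ ‖(∑ m, z 0 m) *
            ((∏ j : Fin n, ∑ m, z j.succ m) - injSum n (fun j => z j.succ))‖
          + ‖∑ j : Fin n, injSum n
              (Function.update (fun k => z k.succ) j (fun m => z 0 m * z j.succ m))‖ :=
        norm_add_le _ _
      _ ≤ ((n + 2).factorial : ℝ) * (g ^ 2 * (g + M) ^ (n - 1))
          + ∑ j : Fin n, (n.factorial : ℝ) * (g ^ 2 * (g + M) ^ (n - 1)) :=
        add_le_add hfirst ((norm_sum_le _ _).trans
          (Finset.sum_le_sum fun j _ => hmerge j))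
      _ = (((n + 2).factorial : ℝ) + n * n.factorial) * (g ^ 2 * (g + M) ^ (n - 1)) := by
        rw [Finset.sum_const, Finset.card_univ, Fintype.card_fin]
        ring
      _ ≤ ((n + 3).factorial : ℝ) * (g ^ 2 * (g + M) ^ (n - 1)) := by
        apply mul_le_mul_of_nonneg_right _ (by positivity)
        have h1 : (n + 2).factorial + n * n.factorial ≤ (n + 3).factorial := by
          have h2 : n * n.factorial ≤ (n + 2).factorial := by
            calc n * n.factorial ≤ (n + 1) * n.factorial := by
                  exact Nat.mul_le_mul_right _ (by omega)
              _ = (n + 1).factorial := (Nat.factorial_succ n).symm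
              _ ≤ (n + 2).factorial := Nat.factorial_le (by omega)
          calc (n + 2).factorial + n * n.factorial ≤ 2 * (n + 2).factorial := by omega
            _ ≤ (n + 3) * (n + 2).factorial := Nat.mul_le_mul_right _ (by omega)
            _ = (n + 3).factorial := rfl
        exact_mod_cast h1
      _ = ((n + 1 + 2).factorial : ℝ) * (g ^ 2 * (g + M) ^ (n + 1 - 2)) := by
        rw [show n + 1 - 2 = n - 1 by omega, show n + 1 + 2 = n + 3 by omega]

end Combinatorial

open MeasureTheory Finset
open scoped ENNReal NNReal

section MeasureLemmas
variable {X : Type} [MeasurableSpace X] {μ : Measure X}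

lemma memLp_conj {f : X → ℂ} {p : ℝ≥0∞} (hf : MemLp f p μ) :
    MemLp (fun x => (starRingEnd ℂ) (f x)) p μ := by
  refine ⟨RCLike.continuous_conj.comp_aestronglyMeasurable hf.1, ?_⟩
  have : eLpNorm (fun x => (starRingEnd ℂ) (f x)) p μ = eLpNorm f p μ := by
    apply eLpNorm_congr_norm_ae
    filter_upwards with x
    simp
  rw [this]
  exact hf.2

lemma memLp_prod_finset {n : ℕ} (hn : n ≠ 0) (φ : Fin n → X → ℂ)
    (h : ∀ j, MemLp (φ j) n μ) (s : Finset (Fin n)) :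
    MemLp (fun x => ∏ j ∈ s, φ j x) ((n : ℝ≥0∞) / s.card) μ := by
  classical
  induction s using Finset.induction_on with
  | empty =>
    simp only [Finset.prod_empty, Finset.card_empty, Nat.cast_zero]
    rw [ENNReal.div_zero (by exact_mod_cast hn)]
    exact memLp_top_const 1
  | insert a s ha ih =>
    have hn' : (n : ℝ≥0∞) ≠ 0 := by exact_mod_cast hn
    have key : MemLp ((fun x => φ a x) • (fun x => ∏ j ∈ s, φ j x)) ((n : ℝ≥0∞) / (s.card + 1)) μ := by
      haveI : ENNReal.HolderTriple (n : ℝ≥0∞) ((n : ℝ≥0∞) / s.card) ((n : ℝ≥0∞) / (s.card + 1)) := ⟨by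
        rw [ENNReal.inv_div (Or.inr (by simp)) (Or.inr hn'),
          ENNReal.inv_div (Or.inr (by simp)) (Or.inr hn'),
          ← ENNReal.div_add_div_same, one_div, add_comm]⟩
      exact MemLp.smul ih (h a)
    have hcard : ((insert a s).card : ℝ≥0∞) = (s.card : ℝ≥0∞) + 1 := by
      rw [Finset.card_insert_of_notMem ha]
      push_cast
      ring
    rw [show (fun x => ∏ j ∈ insert a s, φ j x) = ((fun x => φ a x) • (fun x => ∏ j ∈ s, φ j x)) by
      funext x
      simp [Finset.prod_insert ha]]
    rw [hcard]
    exact key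

lemma integrable_prod_memLp {n : ℕ} (hn : n ≠ 0) (φ : Fin n → X → ℂ)
    (h : ∀ j, MemLp (φ j) n μ) :
    Integrable (fun x => ∏ j, φ j x) μ := by
  have := memLp_prod_finset hn φ h Finset.univ
  rw [Finset.card_univ, Fintype.card_fin, ENNReal.div_self (by exact_mod_cast hn) (by simp)] at this
  exact memLp_one_iff_integrable.mp this

end MeasureLemmas

lemma prod_ite_even (a b : ℂ) (r : ℕ) :
    ∏ j ∈ Finset.range (2 * r), (if Even j then a else b) = (a * b) ^ r := by
  induction r with
  | zero => simp
  | succ r ih =>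
    rw [show 2 * (r + 1) = 2 * r + 1 + 1 by ring, Finset.prod_range_succ, Finset.prod_range_succ, ih]
    have h1 : Even (2 * r) := even_two_mul r
    have h2 : ¬ Even (2 * r + 1) := by simp [Nat.even_add_one, h1]
    rw [if_pos h1, if_neg h2]
    ring

lemma lint_holder {X : Type} [MeasurableSpace X] {μ : Measure X} (u v : X → ℝ≥0∞)
    (hu : AEMeasurable u μ) (hv : AEMeasurable v μ) {n a s : ℕ} (has : a + s = n) (ha : a ≠ 0) :
    ∫⁻ x, u x ^ a * v x ^ s ∂μ ≤
      ((∫⁻ x, u x ^ n ∂μ) ^ (1 / (n : ℝ))) ^ a * ((∫⁻ x, v x ^ n ∂μ) ^ (1 / (n : ℝ))) ^ s := by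
  have hn : n ≠ 0 := by omega
  rcases Nat.eq_zero_or_pos s with hs | hs
  · subst hs
    have han : a = n := by omega
    subst han
    simp only [pow_zero, mul_one]
    rw [← ENNReal.rpow_natCast ((∫⁻ x, u x ^ a ∂μ) ^ (1 / (a:ℝ))) a, ← ENNReal.rpow_mul]
    rw [one_div_mul_cancel (by exact_mod_cast hn), ENNReal.rpow_one]
  · have hsn : s ≠ 0 := by omega
    have han : (0:ℝ) < a := by positivity
    have hsn' : (0:ℝ) < s := by positivity
    have hnn : (0:ℝ) < n := by positivity
    have haltn : (a:ℝ) < n := by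
      have : a < n := by omega
      exact_mod_cast this
    have hconj : ((n:ℝ)/a).HolderConjugate ((n:ℝ)/s) := by
      rw [Real.holderConjugate_iff]
      constructor
      · rw [lt_div_iff₀ han]; linarith
      · rw [inv_div, inv_div]
        field_simp
        push_cast [← has]
        ring
    have h := ENNReal.lintegral_mul_le_Lp_mul_Lq μ hconj
      (f := fun x => u x ^ a) (g := fun x => v x ^ s)
      (hu.pow_const a) (hv.pow_const s)
    have e1 : ∀ x, (u x ^ a) ^ ((n:ℝ)/a) = u x ^ n := by
      intro x
      rw [← ENNReal.rpow_natCast (u x) a, ← ENNReal.rpow_mul]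
      rw [show (a:ℝ) * ((n:ℝ)/a) = (n:ℝ) by field_simp, ENNReal.rpow_natCast]
    have e2 : ∀ x, (v x ^ s) ^ ((n:ℝ)/s) = v x ^ n := by
      intro x
      rw [← ENNReal.rpow_natCast (v x) s, ← ENNReal.rpow_mul]
      rw [show (s:ℝ) * ((n:ℝ)/s) = (n:ℝ) by field_simp, ENNReal.rpow_natCast]
    simp only [Pi.mul_apply] at h
    calc ∫⁻ x, u x ^ a * v x ^ s ∂μ
        ≤ (∫⁻ x, (u x ^ a) ^ ((n:ℝ)/a) ∂μ) ^ (1 / ((n:ℝ)/a))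
          * (∫⁻ x, (v x ^ s) ^ ((n:ℝ)/s) ∂μ) ^ (1 / ((n:ℝ)/s)) := h
      _ = ((∫⁻ x, u x ^ n ∂μ) ^ (1 / (n : ℝ))) ^ a * ((∫⁻ x, v x ^ n ∂μ) ^ (1 / (n : ℝ))) ^ s := by
          simp_rw [e1, e2]
          rw [← ENNReal.rpow_natCast ((∫⁻ x, u x ^ n ∂μ) ^ (1 / (n:ℝ))) a,
            ← ENNReal.rpow_natCast ((∫⁻ x, v x ^ n ∂μ) ^ (1 / (n:ℝ))) s,
            ← ENNReal.rpow_mul, ← ENNReal.rpow_mul]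
          congr 2
          · rw [one_div, one_div, inv_div]
            field_simp
          · rw [one_div, one_div, inv_div]
            field_simp

/-- Type IV superorthogonality implies the direct square-function inequality:
for each `r ≥ 1` there is a constant `C_r` (depending only on `r`) such that for any
σ-finite measure space and any finite family `f₁,…,f_L ∈ L^{2r}` with
`∫ f_{l₁} conj(f_{l₂}) ⋯ f_{l_{2r-1}} conj(f_{l_{2r}}) dμ = 0` whenever the indices are
pairwise distinct, we have `‖∑ f_l‖_{2r} ≤ C_r ‖(∑|f_l|²)^{1/2}‖_{2r}`. -/
theorem typeIV_direct_inequality (r : ℕ) (hr : 0 < r) :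
    ∃ C : ℝ, 0 < C ∧
      ∀ (X : Type) (_ : MeasurableSpace X) (μ : Measure X), SigmaFinite μ →
      ∀ (L : ℕ) (f : Fin L → X → ℂ),
        (∀ l, MemLp (f l) (2 * r) μ) →
        (∀ l : Fin (2 * r) → Fin L, Function.Injective l →
          ∫ x, ∏ j : Fin (2 * r),
            (if Even (j : ℕ) then f (l j) x else (starRingEnd ℂ) (f (l j) x)) ∂μ = 0) →
        eLpNorm (fun x => ∑ l, f l x) (2 * r) μ ≤
          ENNReal.ofReal C *
            eLpNorm (fun x => (∑ l, ‖f l x‖ ^ 2) ^ ((1 : ℝ) / 2)) (2 * r) μ := by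
  classical
  set n : ℕ := 2 * r with hndef
  have hn0 : n ≠ 0 := by omega
  have hn2 : 2 ≤ n := by omega
  set Kr : ℝ := ((n + 2).factorial : ℝ) * 2 ^ (n - 2) with hKr
  have hKr_nonneg : 0 ≤ Kr := by positivity
  refine ⟨max 1 (Real.sqrt Kr), lt_of_lt_of_le one_pos (le_max_left _ _), ?_⟩
  intro X mX μ _ L f hf hvanish
  set C : ℝ := max 1 (Real.sqrt Kr) with hCdef
  have hpn : (2 * (r : ℝ≥0∞)) = ((n : ℕ) : ℝ≥0∞) := by
    rw [hndef]; push_cast; ring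
  rw [hpn]
  set S : X → ℂ := fun x => ∑ l, f l x with hSdef
  set G : X → ℝ := fun x => (∑ l, ‖f l x‖ ^ 2) ^ ((1 : ℝ) / 2) with hGdef
  have hf' : ∀ l, MemLp (f l) ((n : ℕ) : ℝ≥0∞) μ := fun l => hpn ▸ hf l
  have hS_mem : MemLp S ((n : ℕ) : ℝ≥0∞) μ :=
    memLp_finset_sum Finset.univ (fun l _ => hf' l)
  -- nonnegativity and pointwise facts about G
  have hsum_nonneg : ∀ x, 0 ≤ ∑ l, ‖f l x‖ ^ 2 := fun x =>
    Finset.sum_nonneg fun l _ => by positivity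
  have hG_nonneg : ∀ x, 0 ≤ G x := fun x => Real.rpow_nonneg (hsum_nonneg x) _
  have hG_sq : ∀ x, G x ^ 2 = ∑ l, ‖f l x‖ ^ 2 := by
    intro x
    rw [hGdef]
    rw [← Real.rpow_natCast ((∑ l, ‖f l x‖ ^ 2) ^ ((1:ℝ)/2)) 2,
      ← Real.rpow_mul (hsum_nonneg x)]
    norm_num
  have hG_ge : ∀ x (m : Fin L), ‖f m x‖ ≤ G x := by
    intro x m
    have h1 : ‖f m x‖ ^ 2 ≤ G x ^ 2 := by
      rw [hG_sq]
      exact Finset.single_le_sum (f := fun l => ‖f l x‖ ^ 2)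
        (fun l _ => by positivity) (Finset.mem_univ m)
    calc ‖f m x‖ = Real.sqrt (‖f m x‖ ^ 2) :=
          (Real.sqrt_sq (by positivity)).symm
      _ ≤ Real.sqrt (G x ^ 2) := Real.sqrt_le_sqrt h1
      _ = G x := Real.sqrt_sq (hG_nonneg x)
  -- measurability of G
  have hG_meas : AEStronglyMeasurable G μ := by
    have h1 : AEMeasurable (fun x => ∑ l, ‖f l x‖ ^ 2) μ := by
      apply Finset.aemeasurable_fun_sum
      intro l _
      have := (hf' l).1.norm.aemeasurable
      have h2 : AEMeasurable (fun x => ‖f l x‖) μ := by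
        simpa using this
      exact h2.pow_const 2
    have h2 : G = fun x => Real.sqrt (∑ l, ‖f l x‖ ^ 2) := by
      funext x; rw [hGdef, Real.sqrt_eq_rpow]
    rw [h2]
    exact (Real.continuous_sqrt.measurable.comp_aemeasurable h1).aestronglyMeasurable
  have hG_mem : MemLp G ((n : ℕ) : ℝ≥0∞) μ := by
    have habs_mem : ∀ l : Fin L, MemLp (fun x => ‖f l x‖) ((n : ℕ) : ℝ≥0∞) μ := by
      intro l
      have := (hf' l).norm
      simpa using this
    have hsum_mem : MemLp (fun x => ∑ l, ‖f l x‖) ((n : ℕ) : ℝ≥0∞) μ :=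
      memLp_finset_sum Finset.univ (fun l _ => habs_mem l)
    apply hsum_mem.of_le hG_meas
    filter_upwards with x
    have hT : (0:ℝ) ≤ ∑ l, ‖f l x‖ := Finset.sum_nonneg fun l _ => by positivity
    rw [Real.norm_of_nonneg (hG_nonneg x), Real.norm_of_nonneg hT]
    have h1 : G x ^ 2 ≤ (∑ l, ‖f l x‖) ^ 2 := by
      rw [hG_sq]
      have : ∀ l : Fin L, ‖f l x‖ ^ 2
          ≤ ‖f l x‖ * ∑ k, ‖f k x‖ := by
        intro l
        rw [pow_two]
        exact mul_le_mul_of_nonneg_left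
          (Finset.single_le_sum (f := fun k => ‖f k x‖)
            (fun k _ => by positivity) (Finset.mem_univ l)) (by positivity)
      calc ∑ l, ‖f l x‖ ^ 2
          ≤ ∑ l, ‖f l x‖ * ∑ k, ‖f k x‖ :=
            Finset.sum_le_sum fun l _ => this l
        _ = (∑ l, ‖f l x‖) ^ 2 := by rw [← Finset.sum_mul]; ring
    calc G x = Real.sqrt (G x ^ 2) := (Real.sqrt_sq (hG_nonneg x)).symm
      _ ≤ Real.sqrt ((∑ l, ‖f l x‖) ^ 2) := Real.sqrt_le_sqrt h1
      _ = ∑ l, ‖f l x‖ := Real.sqrt_sq hT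
  -- the tuple functions
  set zz : X → Fin n → Fin L → ℂ :=
    fun x j m => if Even (j : ℕ) then f m x else (starRingEnd ℂ) (f m x) with hzzdef
  have hsum_eq : ∀ x (j : Fin n), (∑ m, zz x j m)
      = if Even (j : ℕ) then S x else (starRingEnd ℂ) (S x) := by
    intro x j
    by_cases h : Even (j : ℕ)
    · simp only [hzzdef, h, if_true]; rfl
    · simp only [hzzdef, h, if_false]
      rw [hSdef]
      exact (map_sum (starRingEnd ℂ) (fun m => f m x) Finset.univ).symm
  set Tall : X → ℂ := fun x => ∏ j : Fin n, ∑ m, zz x j m with hTalldef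
  set Tinj : X → ℂ := fun x => injSum n (zz x) with hTinjdef
  -- integrability of each tuple product
  have hfactor_mem : ∀ (j : Fin n) (m : Fin L),
      MemLp (fun x => zz x j m) ((n : ℕ) : ℝ≥0∞) μ := by
    intro j m
    by_cases h : Even (j : ℕ)
    · simp only [hzzdef, h, if_true]
      exact hf' m
    · simp only [hzzdef, h, if_false]
      exact memLp_conj (hf' m)
  have hprod_int : ∀ l : Fin n → Fin L,
      Integrable (fun x => ∏ j, zz x j (l j)) μ :=
    fun l => integrable_prod_memLp hn0 (fun j x => zz x j (l j)) (fun j => hfactor_mem j (l j))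
  have hTall_int : Integrable Tall μ := by
    apply integrable_prod_memLp hn0 (fun j x => ∑ m, zz x j m)
    intro j
    by_cases h : Even (j : ℕ)
    · have : (fun x => ∑ m, zz x j m) = S := by
        funext x; rw [hsum_eq x j, if_pos h]
      rw [this]; exact hS_mem
    · have : (fun x => ∑ m, zz x j m) = fun x => (starRingEnd ℂ) (S x) := by
        funext x; rw [hsum_eq x j, if_neg h]
      rw [this]; exact memLp_conj hS_mem
  have hTinj_int : Integrable Tinj μ := by
    have : Tinj = fun x => ∑ l ∈ Finset.univ.filter
        (fun l : Fin n → Fin L => Function.Injective l), ∏ j, zz x j (l j) := rfl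
    rw [this]
    exact integrable_finset_sum _ (fun l _ => hprod_int l)
  have hTinj_zero : ∫ x, Tinj x ∂μ = 0 := by
    have : Tinj = fun x => ∑ l ∈ Finset.univ.filter
        (fun l : Fin n → Fin L => Function.Injective l), ∏ j, zz x j (l j) := rfl
    rw [this, integral_finset_sum _ (fun l _ => hprod_int l)]
    apply Finset.sum_eq_zero
    intro l hl
    have hinj : Function.Injective l := (Finset.mem_filter.mp hl).2
    exact hvanish l hinj
  -- Tall equals |S|^n as a complex number
  have hTall_eq : ∀ x, Tall x = ((‖S x‖ ^ n : ℝ) : ℂ) := by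
    intro x
    show (∏ j : Fin n, ∑ m, zz x j m) = _
    have h1 : ∏ j : Fin n, (∑ m, zz x j m)
        = ∏ j : Fin n, (if Even ((j : Fin n) : ℕ) then S x else (starRingEnd ℂ) (S x)) :=
      Finset.prod_congr rfl fun j _ => hsum_eq x j
    rw [h1, Fin.prod_univ_eq_prod_range (fun i => if Even i then S x else (starRingEnd ℂ) (S x)) n,
      hndef, prod_ite_even, Complex.mul_conj]
    rw [← Complex.ofReal_pow, ← Complex.sq_norm, ← pow_mul]
  set RA : ℝ := ∫ x, ‖S x‖ ^ n ∂μ with hRAdef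
  have hRA_int : Integrable (fun x => ‖S x‖ ^ n) μ := by
    have := hS_mem.integrable_norm_rpow (by exact_mod_cast hn0) (by simp)
    have heq : (fun x => ‖S x‖ ^ (((n : ℕ) : ℝ≥0∞)).toReal) = fun x => ‖S x‖ ^ n := by
      funext x
      rw [show (((n : ℕ) : ℝ≥0∞)).toReal = (n : ℝ) by simp, Real.rpow_natCast]
    rwa [heq] at this
  have hRA_nonneg : 0 ≤ RA := integral_nonneg fun x => by positivity
  have hTall_integral : ∫ x, Tall x ∂μ = ((RA : ℝ) : ℂ) := by
    rw [show (fun x => Tall x) = fun x => ((‖S x‖ ^ n : ℝ) : ℂ) from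
      funext hTall_eq]
    exact integral_ofReal
  -- RA is bounded by the integral of ‖Tall - Tinj‖
  have hRA_le : RA ≤ ∫ x, ‖Tall x - Tinj x‖ ∂μ := by
    have h1 : ∫ x, (Tall x - Tinj x) ∂μ = ((RA : ℝ) : ℂ) := by
      rw [integral_sub hTall_int hTinj_int, hTinj_zero, hTall_integral, sub_zero]
    calc RA = ‖((RA : ℝ) : ℂ)‖ := by
          rw [Complex.norm_real, Real.norm_of_nonneg hRA_nonneg]
      _ = ‖∫ x, (Tall x - Tinj x) ∂μ‖ := by rw [h1]
      _ ≤ ∫ x, ‖Tall x - Tinj x‖ ∂μ := norm_integral_le_integral_norm _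
  -- pointwise combinatorial bound
  have hptwise : ∀ x, ‖Tall x - Tinj x‖ ≤
      ((n + 2).factorial : ℝ) * (G x ^ 2 * (G x + ‖S x‖) ^ (n - 2)) := by
    intro x
    have key := abs_prod_sub_injSum_le (hG_nonneg x) (norm_nonneg (S x))
      (w := fun m => ‖f m x‖)
      (fun m => norm_nonneg _) (fun m => hG_ge x m)
      (le_of_eq (hG_sq x).symm) n (zz x)
      (by
        intro j m
        by_cases h : Even (j : ℕ)
        · simp only [hzzdef, h, if_true]; exact le_refl _
        · simp only [hzzdef, h, if_false]
          rw [Complex.norm_conj])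
      (by
        intro j
        rw [hsum_eq x j]
        by_cases h : Even (j : ℕ)
        · rw [if_pos h]
        · rw [if_neg h, Complex.norm_conj])
    exact key
  -- pass to lintegrals
  set sE : X → ℝ≥0∞ := fun x => (‖S x‖₊ : ℝ≥0∞) with hsEdef
  set gE : X → ℝ≥0∞ := fun x => (‖G x‖₊ : ℝ≥0∞) with hgEdef
  set IA : ℝ≥0∞ := ∫⁻ x, sE x ^ n ∂μ with hIAdef
  set IB : ℝ≥0∞ := ∫⁻ x, gE x ^ n ∂μ with hIBdef
  have hsE_meas : AEMeasurable sE μ := hS_mem.1.enorm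
  have hgE_meas : AEMeasurable gE μ := hG_meas.enorm
  have hIA_eq : ENNReal.ofReal RA = IA := by
    rw [hRAdef, ofReal_integral_eq_lintegral_ofReal hRA_int
      (Filter.Eventually.of_forall fun x => by positivity)]
    apply lintegral_congr
    intro x
    rw [ENNReal.ofReal_pow (norm_nonneg _), ofReal_norm,
      enorm_eq_nnnorm]
  -- the chain of inequalities in ℝ≥0∞
  have hchain : IA ≤ ENNReal.ofReal ((n + 2).factorial : ℝ)
      * ∫⁻ x, gE x ^ 2 * (gE x + sE x) ^ (n - 2) ∂μ := by
    rw [← hIA_eq]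
    calc ENNReal.ofReal RA ≤ ENNReal.ofReal (∫ x, ‖Tall x - Tinj x‖ ∂μ) :=
          ENNReal.ofReal_le_ofReal hRA_le
      _ = ∫⁻ x, ENNReal.ofReal ‖Tall x - Tinj x‖ ∂μ :=
          ofReal_integral_eq_lintegral_ofReal (hTall_int.sub hTinj_int).norm
            (Filter.Eventually.of_forall fun x => norm_nonneg _)
      _ ≤ ∫⁻ x, ENNReal.ofReal (((n + 2).factorial : ℝ)
            * (G x ^ 2 * (G x + ‖S x‖) ^ (n - 2))) ∂μ :=
          lintegral_mono fun x => ENNReal.ofReal_le_ofReal (hptwise x)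
      _ = ∫⁻ x, ENNReal.ofReal ((n + 2).factorial : ℝ)
            * (gE x ^ 2 * (gE x + sE x) ^ (n - 2)) ∂μ := by
          apply lintegral_congr
          intro x
          rw [ENNReal.ofReal_mul (by positivity)]
          congr 1
          rw [ENNReal.ofReal_mul (by positivity), ENNReal.ofReal_pow (hG_nonneg x),
            ENNReal.ofReal_pow (by positivity), ENNReal.ofReal_add (hG_nonneg x) (by positivity)]
          have e1 : ENNReal.ofReal (G x) = gE x := by
            show ENNReal.ofReal (G x) = (‖G x‖₊ : ℝ≥0∞)
            rw [← enorm_eq_nnnorm, ← ofReal_norm, Real.norm_of_nonneg (hG_nonneg x)]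
          have e2 : ENNReal.ofReal (‖S x‖) = sE x := by
            show ENNReal.ofReal (‖S x‖) = (‖S x‖₊ : ℝ≥0∞)
            rw [← enorm_eq_nnnorm, ← ofReal_norm]
          rw [e1, e2]
      _ = ENNReal.ofReal ((n + 2).factorial : ℝ)
            * ∫⁻ x, gE x ^ 2 * (gE x + sE x) ^ (n - 2) ∂μ :=
          lintegral_const_mul' _ _ ENNReal.ofReal_ne_top
  -- eLpNorms in terms of lintegrals
  have ht : (((n : ℕ)) : ℝ≥0∞).toReal = (n : ℝ) := by simp
  have hA_eq : eLpNorm S ((n : ℕ) : ℝ≥0∞) μ = IA ^ (1 / (n : ℝ)) := by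
    rw [eLpNorm_eq_lintegral_rpow_enorm_toReal (by exact_mod_cast hn0) (by simp), ht]
    congr 1
    apply lintegral_congr
    intro x
    exact ENNReal.rpow_natCast _ n
  have hB_eq : eLpNorm G ((n : ℕ) : ℝ≥0∞) μ = IB ^ (1 / (n : ℝ)) := by
    rw [eLpNorm_eq_lintegral_rpow_enorm_toReal (by exact_mod_cast hn0) (by simp), ht]
    congr 1
    apply lintegral_congr
    intro x
    exact ENNReal.rpow_natCast _ n
  set A : ℝ≥0∞ := IA ^ (1 / (n : ℝ)) with hAdef
  set B : ℝ≥0∞ := IB ^ (1 / (n : ℝ)) with hBdef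
  have hA_pow : A ^ n = IA := by
    rw [hAdef, ← ENNReal.rpow_natCast (IA ^ (1 / (n : ℝ))) n, ← ENNReal.rpow_mul, one_div,
      inv_mul_cancel₀ (by exact_mod_cast hn0), ENNReal.rpow_one]
  rw [hA_eq, hB_eq]
  -- binomial expansion of the majorant
  have hbinom : ∫⁻ x, gE x ^ 2 * (gE x + sE x) ^ (n - 2) ∂μ
      = ∑ k ∈ Finset.range (n - 1), ((n - 2).choose k : ℝ≥0∞)
          * ∫⁻ x, gE x ^ (k + 2) * sE x ^ (n - 2 - k) ∂μ := by
    have hpt : ∀ x, gE x ^ 2 * (gE x + sE x) ^ (n - 2)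
        = ∑ k ∈ Finset.range (n - 1), ((n - 2).choose k : ℝ≥0∞)
            * (gE x ^ (k + 2) * sE x ^ (n - 2 - k)) := by
      intro x
      rw [add_pow, show n - 2 + 1 = n - 1 by omega, Finset.mul_sum]
      apply Finset.sum_congr rfl
      intro k hk
      rw [show k + 2 = 2 + k by ring, pow_add]
      ring
    rw [lintegral_congr hpt, lintegral_finset_sum' _ (fun k _ =>
      (((hgE_meas.pow_const _).fun_mul (hsE_meas.pow_const _)).const_mul _))]
    apply Finset.sum_congr rfl
    intro k _
    exact lintegral_const_mul' _ _ (ENNReal.natCast_ne_top _)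
  have hterm : ∀ k ∈ Finset.range (n - 1),
      ∫⁻ x, gE x ^ (k + 2) * sE x ^ (n - 2 - k) ∂μ ≤ B ^ (k + 2) * A ^ (n - 2 - k) := by
    intro k hk
    have hk' : k < n - 1 := Finset.mem_range.mp hk
    exact lint_holder gE sE hgE_meas hsE_meas (by omega) (by omega)
  have hIA_le : IA ≤ ENNReal.ofReal ((n + 2).factorial : ℝ)
      * ∑ k ∈ Finset.range (n - 1), ((n - 2).choose k : ℝ≥0∞)
          * (B ^ (k + 2) * A ^ (n - 2 - k)) := by
    refine hchain.trans ?_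
    rw [hbinom]
    apply mul_le_mul_right
    exact Finset.sum_le_sum fun k hk => mul_le_mul_right (hterm k hk) _
  -- final algebra
  rcases le_or_gt A B with hAB | hBA
  · calc A ≤ B := hAB
      _ = 1 * B := (one_mul B).symm
      _ ≤ ENNReal.ofReal C * B := by
        apply mul_le_mul_left
        rw [ENNReal.one_le_ofReal]
        exact le_max_left _ _
  · by_cases hA0 : A = 0
    · rw [hA0]
      exact zero_le
    · have hA_top : A ≠ ⊤ := by
        rw [← hA_eq]
        exact hS_mem.eLpNorm_lt_top.ne
      have hstep : IA ≤ (ENNReal.ofReal Kr * B ^ 2) * A ^ (n - 2) := by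
        refine hIA_le.trans ?_
        have hterm2 : ∀ k ∈ Finset.range (n - 1),
            ((n - 2).choose k : ℝ≥0∞) * (B ^ (k + 2) * A ^ (n - 2 - k))
              ≤ ((n - 2).choose k : ℝ≥0∞) * (B ^ 2 * A ^ (n - 2)) := by
          intro k hk
          have hk' : k < n - 1 := Finset.mem_range.mp hk
          apply mul_le_mul_right
          calc B ^ (k + 2) * A ^ (n - 2 - k) = B ^ 2 * (B ^ k * A ^ (n - 2 - k)) := by
                rw [show k + 2 = 2 + k by ring, pow_add]
                ring
            _ ≤ B ^ 2 * (A ^ k * A ^ (n - 2 - k)) := by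
                apply mul_le_mul_right
                exact mul_le_mul_left (pow_le_pow_left' hBA.le k) _
            _ = B ^ 2 * A ^ (n - 2) := by
                rw [← pow_add, show k + (n - 2 - k) = n - 2 by omega]
        calc ENNReal.ofReal ((n + 2).factorial : ℝ)
              * ∑ k ∈ Finset.range (n - 1), ((n - 2).choose k : ℝ≥0∞)
                  * (B ^ (k + 2) * A ^ (n - 2 - k))
            ≤ ENNReal.ofReal ((n + 2).factorial : ℝ)
              * ∑ k ∈ Finset.range (n - 1), ((n - 2).choose k : ℝ≥0∞)
                  * (B ^ 2 * A ^ (n - 2)) :=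
              mul_le_mul_right (Finset.sum_le_sum hterm2) _
          _ = ENNReal.ofReal ((n + 2).factorial : ℝ)
              * ((2 : ℝ≥0∞) ^ (n - 2) * (B ^ 2 * A ^ (n - 2))) := by
              rw [← Finset.sum_mul, ← Nat.cast_sum]
              congr 2
              rw [show n - 1 = (n - 2) + 1 by omega, Nat.sum_range_choose]
              push_cast
              ring
          _ = (ENNReal.ofReal Kr * B ^ 2) * A ^ (n - 2) := by
              rw [hKr, ENNReal.ofReal_mul (by positivity), ENNReal.ofReal_pow (by norm_num : (0:ℝ) ≤ 2),
                ENNReal.ofReal_ofNat]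
              ring
      have hcancel : A ^ 2 ≤ ENNReal.ofReal Kr * B ^ 2 := by
        have h1 : A ^ 2 * A ^ (n - 2) ≤ (ENNReal.ofReal Kr * B ^ 2) * A ^ (n - 2) := by
          rw [← pow_add, show 2 + (n - 2) = n by omega, hA_pow]
          exact hstep
        exact (ENNReal.mul_le_mul_iff_left (pow_ne_zero _ hA0) (ENNReal.pow_ne_top hA_top)).mp h1
      have hC2 : ENNReal.ofReal Kr ≤ (ENNReal.ofReal C) ^ 2 := by
        rw [← Real.sq_sqrt hKr_nonneg, ENNReal.ofReal_pow (Real.sqrt_nonneg _)]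
        exact pow_le_pow_left' (ENNReal.ofReal_le_ofReal (le_max_right _ _)) 2
      have h2 : A ^ 2 ≤ (ENNReal.ofReal C * B) ^ 2 := by
        rw [mul_pow]
        exact hcancel.trans (mul_le_mul_left hC2 _)
      have hsq : ∀ x : ℝ≥0∞, (x ^ (2:ℕ)) ^ ((1:ℝ)/2) = x := by
        intro x
        rw [← ENNReal.rpow_natCast x 2, ← ENNReal.rpow_mul]
        norm_num
      have h3 := ENNReal.rpow_le_rpow h2 (by norm_num : (0:ℝ) ≤ 1/2)
      rw [hsq, hsq] at h3
      exact h3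
end

section
/- Let r ∈ ℕ⁺ and let f₁,...,f_L be complex-valued measurable functions on a measure space X. For any partition P of {1,...,2r} whose blocks all have size at least 1, the pointwise bound |∑_{(l_P)} f_{l_{P(1)}} conj(f_{l_{P(2)}}) ⋯ f_{l_{P(2r−1)}} conj(f_{l_{P(2r)}})| ≤ |∑_{l=1}^L f_l|^{s} · (∑_{l=1}^L |f_l|²)^{(2r−s)/2} holds, where s is the number of singleton blocks of P and the sum on the left ranges independently over indices l_B ∈ {1,...,L} for each block B of P. -/
open Finset in
lemma sum_rpow_le_rpow_sum {ι : Type*} (s : Finset ι) (c : ι → ℝ) (hc : ∀ i ∈ s, 0 ≤ c i)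
    {p : ℝ} (hp : 1 ≤ p) : ∑ i ∈ s, c i ^ p ≤ (∑ i ∈ s, c i) ^ p := by
  have hp0 : 0 < p := lt_of_lt_of_le zero_lt_one hp
  have hS : 0 ≤ ∑ i ∈ s, c i := Finset.sum_nonneg hc
  rcases hS.eq_or_lt with h0 | hpos
  · have hall : ∀ i ∈ s, c i = 0 := by
      intro i hi
      exact (Finset.sum_eq_zero_iff_of_nonneg hc).mp h0.symm i hi
    have : ∑ i ∈ s, c i ^ p = 0 := by
      apply Finset.sum_eq_zero
      intro i hi
      rw [hall i hi, Real.zero_rpow hp0.ne']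
    rw [this, ← h0, Real.zero_rpow hp0.ne']
  · calc ∑ i ∈ s, c i ^ p ≤ ∑ i ∈ s, c i * (∑ j ∈ s, c j) ^ (p - 1) := by
          apply Finset.sum_le_sum
          intro i hi
          rcases (hc i hi).eq_or_lt with hci | hci
          · rw [← hci, Real.zero_rpow hp0.ne', zero_mul]
          · have h1 : c i ^ p = c i * c i ^ (p - 1) := by
              nth_rw 2 [← Real.rpow_one (c i)]
              rw [← Real.rpow_add hci]; ring_nf
            rw [h1]
            apply mul_le_mul_of_nonneg_left _ (hc i hi)
            exact Real.rpow_le_rpow (hc i hi)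
              (Finset.single_le_sum hc hi) (by linarith)
      _ = (∑ j ∈ s, c j) * (∑ j ∈ s, c j) ^ (p - 1) := by rw [← Finset.sum_mul]
      _ = (∑ j ∈ s, c j) ^ p := by
          nth_rw 1 [← Real.rpow_one (∑ j ∈ s, c j)]
          rw [← Real.rpow_add hpos]; ring_nf

open scoped Classical in
/-- Pointwise bound: for a partition `P` of `{1,…,2r}` with `s` singleton blocks, the
sum over independent block indices of the alternating products is bounded by
`|∑ f_l|^s · (∑|f_l|²)^((2r−s)/2)` pointwise. -/
theorem pointwise_block_bound (r L : ℕ) (hr : 0 < r) (X : Type*) (f : Fin L → X → ℂ)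
    (P : Setoid (Fin (2 * r))) (x : X) :
    ‖(∑ l : Quotient P → Fin L, ∏ j : Fin (2 * r),
        (if Even (j : ℕ) then f (l (Quotient.mk P j)) x
          else (starRingEnd ℂ) (f (l (Quotient.mk P j)) x)))‖
    ≤ ‖(∑ l, f l x)‖ ^ ({c ∈ P.classes | c.ncard = 1}.ncard)
        * (∑ l, ‖(f l x)‖ ^ 2) ^
            (((2 * r : ℝ) - ({c ∈ P.classes | c.ncard = 1}.ncard : ℝ)) / 2) := by
  classical
  set A : ℝ := ‖∑ l, f l x‖ with hA
  set B : ℝ := ∑ l, ‖f l x‖ ^ 2 with hB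
  have hB0 : 0 ≤ B := Finset.sum_nonneg fun i _ => sq_nonneg _
  set g : Fin (2 * r) → Fin L → ℂ :=
    fun j i => if Even (j : ℕ) then f i x else (starRingEnd ℂ) (f i x) with hg
  set m : Quotient P → ℕ :=
    fun q => (Finset.univ.filter fun j => Quotient.mk P j = q).card with hm
  set S : Quotient P → ℂ :=
    fun q => ∑ i : Fin L, ∏ j ∈ Finset.univ.filter (fun j => Quotient.mk P j = q), g j i
    with hS
  -- fibers nonempty
  have hm1 : ∀ q, 1 ≤ m q := by
    intro q
    induction q using Quotient.inductionOn with
    | h a =>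
      refine Finset.card_pos.mpr ⟨a, ?_⟩
      simp only [hm, Finset.mem_filter, Finset.mem_univ, true_and]
  -- total fiber count
  have hsum_m : ∑ q : Quotient P, m q = 2 * r := by
    rw [hm, ← Finset.card_eq_sum_card_fiberwise (fun j _ => Finset.mem_univ _)]
    simp
  -- fiber cardinality equals ncard of the class
  set e := Setoid.quotientEquivClasses P with he
  have hcard : ∀ q : Quotient P, ((e q : Set (Fin (2 * r)))).ncard = m q := by
    intro q
    induction q using Quotient.inductionOn with
    | h a =>
      have h1 : (e (Quotient.mk P a) : Set (Fin (2 * r))) = { y | P.r y a } :=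
        Setoid.quotientEquivClasses_mk_eq P a
      have h2 : { y | P.r y a } =
          ↑(Finset.univ.filter fun j => Quotient.mk P j = Quotient.mk P a) := by
        ext y
        simp only [Set.mem_setOf_eq, Finset.coe_filter, Finset.mem_univ, true_and,
          Quotient.eq]
      rw [h1, h2, Set.ncard_coe_finset]
  -- the singleton count
  have hs : ({c ∈ P.classes | c.ncard = 1} : Set (Set (Fin (2 * r)))).ncard
      = (Finset.univ.filter fun q : Quotient P => m q = 1).card := by
    have himg : ({c ∈ P.classes | c.ncard = 1} : Set (Set (Fin (2 * r))))
        = (fun q : Quotient P => (e q : Set (Fin (2 * r)))) '' { q | m q = 1 } := by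
      ext c
      constructor
      · rintro ⟨hc, h1⟩
        refine ⟨e.symm ⟨c, hc⟩, ?_, ?_⟩
        · have := hcard (e.symm ⟨c, hc⟩)
          rw [Equiv.apply_symm_apply] at this
          simpa [← this] using h1
        · simp
      · rintro ⟨q, hq, rfl⟩
        exact ⟨(e q).2, by rw [hcard]; exact hq⟩
    have hinj : Function.Injective (fun q : Quotient P => (e q : Set (Fin (2 * r)))) :=
      Subtype.val_injective.comp e.injective
    rw [himg, Set.ncard_image_of_injective _ hinj]
    have : { q : Quotient P | m q = 1 }
        = ↑(Finset.univ.filter fun q : Quotient P => m q = 1) := by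
      ext q; simp
    rw [this, Set.ncard_coe_finset]
  set s' := (Finset.univ.filter fun q : Quotient P => m q = 1).card with hs'
  rw [hs]
  -- factor the sum over blocks
  have key : (∑ l : Quotient P → Fin L, ∏ j : Fin (2 * r),
        (if Even (j : ℕ) then f (l (Quotient.mk P j)) x
          else (starRingEnd ℂ) (f (l (Quotient.mk P j)) x)))
      = ∏ q : Quotient P, S q := by
    rw [hS]
    rw [Finset.prod_univ_sum]
    rw [Fintype.piFinset_univ]
    apply Finset.sum_congr rfl
    intro l _
    refine Eq.symm ?_
    calc ∏ q : Quotient P, ∏ j ∈ Finset.univ.filter (fun j => Quotient.mk P j = q), g j (l q)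
        = ∏ q : Quotient P, ∏ j ∈ Finset.univ.filter (fun j => Quotient.mk P j = q),
            g j (l (Quotient.mk P j)) := by
          apply Finset.prod_congr rfl
          intro q _
          apply Finset.prod_congr rfl
          intro j hj
          rw [(Finset.mem_filter.mp hj).2]
      _ = ∏ j : Fin (2 * r), g j (l (Quotient.mk P j)) :=
          Finset.prod_fiberwise _ _ _
      _ = _ := rfl
  rw [key, norm_prod]
  by_cases hBz : B = 0
  · -- all functions vanish at x
    have hf : ∀ i : Fin L, f i x = 0 := by
      intro i
      have h0 : ∑ l : Fin L, ‖f l x‖ ^ 2 = 0 := by rw [← hB, hBz]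
      have := (Finset.sum_eq_zero_iff_of_nonneg
        (fun i (_ : i ∈ Finset.univ) => sq_nonneg (‖f i x‖))).mp h0
        i (Finset.mem_univ i)
      have habs : ‖f i x‖ = 0 := by
        nlinarith [norm_nonneg (f i x)]
      exact norm_eq_zero.mp habs
    have hj0 : (0 : ℕ) < 2 * r := by omega
    set j0 : Fin (2 * r) := ⟨0, hj0⟩ with hj0'
    have hSz : S (Quotient.mk P j0) = 0 := by
      apply Finset.sum_eq_zero
      intro i _
      apply Finset.prod_eq_zero (i := j0)
      · simp only [Finset.mem_filter, Finset.mem_univ, true_and]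
      · simp [hg, hf]
    have hL : ∏ q : Quotient P, ‖S q‖ = 0 := by
      apply Finset.prod_eq_zero (Finset.mem_univ (Quotient.mk P j0))
      rw [hSz, norm_zero]
    rw [hL]
    apply mul_nonneg (pow_nonneg (norm_nonneg _) _)
    exact Real.rpow_nonneg hB0 _
  · have hBpos : 0 < B := lt_of_le_of_ne hB0 (Ne.symm hBz)
    set bound : Quotient P → ℝ :=
      fun q => if m q = 1 then A else B ^ ((m q : ℝ) / 2) with hbd
    have hblock : ∀ q : Quotient P, ‖S q‖ ≤ bound q := by
      intro q
      rw [hbd]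
      dsimp only
      split_ifs with h
      · obtain ⟨j, hj⟩ := Finset.card_eq_one.mp h
        rw [hS]
        dsimp only
        rw [hj]
        simp only [Finset.prod_singleton]
        by_cases hev : Even (j : ℕ)
        · have hsum : (∑ i : Fin L, g j i) = ∑ i : Fin L, f i x :=
            Finset.sum_congr rfl (fun i _ => if_pos hev)
          rw [hsum, hA]
        · have hsum : (∑ i : Fin L, g j i) = (starRingEnd ℂ) (∑ i : Fin L, f i x) := by
            rw [map_sum]
            exact Finset.sum_congr rfl (fun i _ => if_neg hev)
          rw [hsum, Complex.norm_conj, hA]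
      · have hm2 : 2 ≤ m q := by have := hm1 q; omega
        have habs : ∀ i : Fin L,
            ‖∏ j ∈ Finset.univ.filter (fun j => Quotient.mk P j = q), g j i‖
              = ‖f i x‖ ^ m q := by
          intro i
          rw [norm_prod]
          have hc : ∀ j ∈ Finset.univ.filter (fun j : Fin (2 * r) => Quotient.mk P j = q),
              ‖g j i‖ = ‖f i x‖ := by
            intro j _
            rw [hg]
            dsimp only
            split_ifs
            · rfl
            · exact Complex.norm_conj _
          rw [Finset.prod_congr rfl hc, Finset.prod_const]
        have hp1 : (1 : ℝ) ≤ (m q : ℝ) / 2 := by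
          have : (2 : ℝ) ≤ (m q : ℝ) := by exact_mod_cast hm2
          linarith
        have hrw : ∀ i : Fin L,
            ‖f i x‖ ^ m q = (‖f i x‖ ^ 2) ^ ((m q : ℝ) / 2) := by
          intro i
          set a : ℝ := ‖f i x‖ with ha
          have ha0 : 0 ≤ a := norm_nonneg _
          calc a ^ m q = a ^ ((m q : ℝ)) := (Real.rpow_natCast a (m q)).symm
            _ = a ^ (((2 : ℕ) : ℝ) * ((m q : ℝ) / 2)) := by
                congr 1
                push_cast
                ring
            _ = (a ^ (((2 : ℕ) : ℝ))) ^ ((m q : ℝ) / 2) := Real.rpow_mul ha0 _ _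
            _ = (a ^ 2) ^ ((m q : ℝ) / 2) := by rw [Real.rpow_natCast]
        calc ‖S q‖
            ≤ ∑ i : Fin L, ‖∏ j ∈ Finset.univ.filter (fun j => Quotient.mk P j = q), g j i‖ := by
              rw [hS]
              exact norm_sum_le _ _
          _ = ∑ i : Fin L, (‖f i x‖ ^ 2) ^ ((m q : ℝ) / 2) := by
              refine Finset.sum_congr rfl (fun i _ => ?_)
              rw [habs i, hrw i]
          _ ≤ (∑ i : Fin L, ‖f i x‖ ^ 2) ^ ((m q : ℝ) / 2) :=
              sum_rpow_le_rpow_sum _ _ (fun i _ => sq_nonneg _) hp1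
          _ = B ^ ((m q : ℝ) / 2) := by rw [← hB]
    have hbnn : ∀ q : Quotient P, 0 ≤ bound q := by
      intro q
      rw [hbd]
      dsimp only
      split_ifs
      · rw [hA]; exact norm_nonneg _
      · exact Real.rpow_nonneg hB0 _
    calc ∏ q : Quotient P, ‖S q‖
        ≤ ∏ q : Quotient P, bound q :=
          Finset.prod_le_prod (fun q _ => norm_nonneg _) (fun q _ => hblock q)
      _ = A ^ s' * B ^ (((2 * r : ℝ) - (s' : ℝ)) / 2) := by
          have h1 : ∏ q ∈ Finset.univ.filter (fun q : Quotient P => m q = 1), bound q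
              = A ^ s' := by
            rw [Finset.prod_congr rfl
              (fun q hq => if_pos ((Finset.mem_filter.mp hq).2)), Finset.prod_const]
          have h2 : ∏ q ∈ Finset.univ.filter (fun q : Quotient P => ¬ m q = 1), bound q
              = B ^ (∑ q ∈ Finset.univ.filter (fun q : Quotient P => ¬ m q = 1),
                  ((m q : ℝ) / 2)) := by
            rw [Finset.prod_congr rfl
              (fun q hq => if_neg ((Finset.mem_filter.mp hq).2))]
            exact (Real.rpow_sum_of_pos hBpos _ _).symm
          have htot : ∑ q : Quotient P, (m q : ℝ) = 2 * (r : ℝ) := by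
            exact_mod_cast congrArg (Nat.cast : ℕ → ℝ) hsum_m
          have hone : ∑ q ∈ Finset.univ.filter (fun q : Quotient P => m q = 1),
              (m q : ℝ) = (s' : ℝ) := by
            have hcongr : ∀ q ∈ Finset.univ.filter (fun q : Quotient P => m q = 1),
                (m q : ℝ) = 1 := by
              intro q hq
              rw [(Finset.mem_filter.mp hq).2]
              norm_num
            rw [Finset.sum_congr rfl hcongr, Finset.sum_const, nsmul_eq_mul, mul_one, hs']
          have hsplit := Finset.sum_filter_add_sum_filter_not Finset.univ
            (fun q : Quotient P => m q = 1) (fun q => (m q : ℝ))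
          have h3 : ∑ q ∈ Finset.univ.filter (fun q : Quotient P => ¬ m q = 1),
              ((m q : ℝ) / 2) = ((2 * r : ℝ) - (s' : ℝ)) / 2 := by
            rw [← Finset.sum_div]
            have : ∑ q ∈ Finset.univ.filter (fun q : Quotient P => ¬ m q = 1),
                (m q : ℝ) = (2 * r : ℝ) - (s' : ℝ) := by linarith
            rw [this]
          rw [← Finset.prod_filter_mul_prod_filter_not Finset.univ
            (fun q : Quotient P => m q = 1) bound, h1, h2, h3]
end
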